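/- arXiv:2506.05141 — 2 statements merged into one kernel-verified Lean document; each statement's English description precedes it below -/
import Mathlib

section
/- There exists a constant c > 0 such that for all t ∈ [0, π], π - (λ₀(t) + λ_π(t)) ≥ c · min(λ₀(t), λ_π(t)) ≥ 0, where λ₀(t) = sin t - t cos t and λ_π(t) = sin t + (π - t) cos t. -/
open Real

private lemma lam0_hasDeriv (t : ℝ) :
    HasDerivAt (fun t => Real.sin t - t * Real.cos t) (t * Real.sin t) t := by
  have h : HasDerivAt (fun t => Real.sin t - t * Real.cos t)
      (Real.cos t - (1 * Real.cos t + t * (-Real.sin t))) t :=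
    (Real.hasDerivAt_sin t).sub ((hasDerivAt_id t).mul (Real.hasDerivAt_cos t))
  convert h using 1; ring

private lemma lam0_nonneg {t : ℝ} (h0 : 0 ≤ t) (hπ : t ≤ π) :
    0 ≤ Real.sin t - t * Real.cos t := by
  have hmono : MonotoneOn (fun t => Real.sin t - t * Real.cos t) (Set.Icc 0 π) := by
    apply monotoneOn_of_deriv_nonneg (convex_Icc 0 π)
    · exact Continuous.continuousOn (by continuity)
    · intro x hx
      exact (lam0_hasDeriv x).differentiableAt.differentiableWithinAt
    · intro x hx
      rw [interior_Icc] at hx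
      rw [(lam0_hasDeriv x).deriv]
      exact mul_nonneg hx.1.le (Real.sin_nonneg_of_nonneg_of_le_pi hx.1.le hx.2.le)
  have := hmono (Set.mem_Icc.mpr ⟨le_refl 0, Real.pi_pos.le⟩) (Set.mem_Icc.mpr ⟨h0, hπ⟩) h0
  simpa using this

private lemma h_hasDeriv (t : ℝ) :
    HasDerivAt (fun t => π - 2*Real.sin t - (π - 2*t)*Real.cos t - (1/2)*(Real.sin t - t*Real.cos t))
      ((π - 5*t/2) * Real.sin t) t := by
  have h1 : HasDerivAt (fun t => π - 2*Real.sin t) (0 - 2*Real.cos t) t :=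
    (hasDerivAt_const t π).sub ((Real.hasDerivAt_sin t).const_mul 2)
  have h2 : HasDerivAt (fun t : ℝ => (π - 2*t)*Real.cos t)
      ((0 - 2*1)*Real.cos t + (π - 2*t)*(-Real.sin t)) t :=
    ((hasDerivAt_const t π).sub ((hasDerivAt_id t).const_mul 2)).mul (Real.hasDerivAt_cos t)
  have h3 : HasDerivAt (fun t => (1/2)*(Real.sin t - t*Real.cos t)) ((1/2)*(t*Real.sin t)) t :=
    (lam0_hasDeriv t).const_mul (1/2)
  have h4 := (h1.fun_sub h2).fun_sub h3
  exact h4.congr_deriv (by ring)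

private lemma key {t : ℝ} (h0 : 0 ≤ t) (h2 : t ≤ π/2) :
    (1/2)*(Real.sin t - t*Real.cos t) ≤ π - 2*Real.sin t - (π - 2*t)*Real.cos t := by
  set h : ℝ → ℝ :=
    fun t => π - 2*Real.sin t - (π - 2*t)*Real.cos t - (1/2)*(Real.sin t - t*Real.cos t) with hdef
  have hcont : Continuous h := by unfold h; continuity
  have hπ5 : (0:ℝ) < 2*π/5 := by positivity
  suffices hge : 0 ≤ h t by
    simp only [hdef] at hge; linarith
  rcases le_or_gt t (2*π/5) with hle | hgt
  · have hmono : MonotoneOn h (Set.Icc 0 (2*π/5)) := by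
      apply monotoneOn_of_deriv_nonneg (convex_Icc 0 (2*π/5)) hcont.continuousOn
      · intro x hx
        exact (h_hasDeriv x).differentiableAt.differentiableWithinAt
      · intro x hx
        rw [interior_Icc] at hx
        rw [(h_hasDeriv x).deriv]
        have hxπ : x ≤ π := by have := hx.2; linarith [Real.pi_pos]
        have hs := Real.sin_nonneg_of_nonneg_of_le_pi hx.1.le hxπ
        have : 0 ≤ π - 5*x/2 := by nlinarith [hx.2]
        positivity
    have h00 : h 0 = 0 := by simp [hdef]
    have := hmono (Set.mem_Icc.mpr ⟨le_refl 0, hπ5.le⟩) (Set.mem_Icc.mpr ⟨h0, hle⟩) h0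
    exact (le_of_eq h00.symm).trans this
  · have hanti : AntitoneOn h (Set.Icc (2*π/5) (π/2)) := by
      apply antitoneOn_of_deriv_nonpos (convex_Icc (2*π/5) (π/2)) hcont.continuousOn
      · intro x hx
        exact (h_hasDeriv x).differentiableAt.differentiableWithinAt
      · intro x hx
        rw [interior_Icc] at hx
        rw [(h_hasDeriv x).deriv]
        have hx0 : 0 ≤ x := le_trans hπ5.le hx.1.le
        have hxπ : x ≤ π := by nlinarith [Real.pi_pos, hx.2]
        have hs := Real.sin_nonneg_of_nonneg_of_le_pi hx0 hxπ
        have hneg : π - 5*x/2 ≤ 0 := by nlinarith [hx.1]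
        exact mul_nonpos_of_nonpos_of_nonneg hneg hs
    have hhalf : 0 ≤ h (π/2) := by
      simp only [hdef, Real.sin_pi_div_two, Real.cos_pi_div_two]
      have := Real.pi_gt_three
      nlinarith
    have := hanti (Set.mem_Icc.mpr ⟨hgt.le, h2⟩)
      (Set.mem_Icc.mpr ⟨by nlinarith [Real.pi_pos], le_refl (π/2)⟩) h2
    exact le_trans hhalf this

theorem dist_from_pi_bound :
    ∃ c : ℝ, 0 < c ∧ ∀ t ∈ Set.Icc (0:ℝ) π,
      π - ((Real.sin t - t * Real.cos t) + (Real.sin t + (π - t) * Real.cos t)) ≥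
        c * min (Real.sin t - t * Real.cos t) (Real.sin t + (π - t) * Real.cos t) ∧
      c * min (Real.sin t - t * Real.cos t) (Real.sin t + (π - t) * Real.cos t) ≥ 0 := by
  refine ⟨1/2, by norm_num, ?_⟩
  intro t ht
  obtain ⟨h0, hπ⟩ := ht
  have hA : 0 ≤ Real.sin t - t * Real.cos t := lam0_nonneg h0 hπ
  have hB : 0 ≤ Real.sin t + (π - t) * Real.cos t := by
    have := lam0_nonneg (t := π - t) (by linarith) (by linarith)
    rw [Real.sin_pi_sub, Real.cos_pi_sub] at this
    nlinarith
  have hmin0 : 0 ≤ min (Real.sin t - t * Real.cos t) (Real.sin t + (π - t) * Real.cos t) :=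
    le_min hA hB
  refine ⟨?_, by linarith⟩
  rcases le_or_gt t (π/2) with hle | hgt
  · have hk := key h0 hle
    have hm := min_le_left (Real.sin t - t * Real.cos t) (Real.sin t + (π - t) * Real.cos t)
    nlinarith
  · have hk := key (t := π - t) (by linarith) (by linarith)
    rw [Real.sin_pi_sub, Real.cos_pi_sub] at hk
    have hm := min_le_right (Real.sin t - t * Real.cos t) (Real.sin t + (π - t) * Real.cos t)
    nlinarith
end

section
/- Let a be a unit quaternion. The set { (c, ā c a) : c a purely imaginary unit quaternion } equals the image under the map (a, b) ↦ (b ā, ā b) of the set of pairs (a, b) with b a unit quaternion orthogonal to a. In other words, the set of oriented 2-planes in ℝ⁴ ≅ ℍ containing a corresponds, under the identification a∧b ↦ (1/√2)(b ā, ā b), to the graph of the rotation R_a(c) = ā c a on the unit sphere of imaginary quaternions. -/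
/-- The set of planes containing a unit quaternion `a`, described via the pairs
`(b ā, ā b)` with `b` a unit quaternion orthogonal to `a`, coincides with the graph of
the rotation `c ↦ ā c a` on unit imaginary quaternions. -/
theorem planes_containing_a_eq_graph_rotation (a : Quaternion ℝ) (ha : ‖a‖ = 1) :
    {p : Quaternion ℝ × Quaternion ℝ |
        ∃ b : Quaternion ℝ, ‖b‖ = 1 ∧ (a * star b).re = 0 ∧
          p = (b * star a, star a * b)} =
    {p : Quaternion ℝ × Quaternion ℝ |
        ∃ c : Quaternion ℝ, ‖c‖ = 1 ∧ c.re = 0 ∧ p = (c, star a * c * a)} := by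
  have hsa : star a * a = 1 := by
    rw [Quaternion.star_mul_self]
    rw [Quaternion.normSq_eq_norm_mul_self, ha, one_mul, Quaternion.coe_one]
  have has : a * star a = 1 := by
    rw [Quaternion.self_mul_star]
    rw [Quaternion.normSq_eq_norm_mul_self, ha, one_mul, Quaternion.coe_one]
  ext p
  constructor
  · rintro ⟨b, hb, hab, rfl⟩
    refine ⟨b * star a, by simp [norm_mul, hb, ha], ?_, ?_⟩
    · have : (b * star a).re = (star (b * star a)).re := (Quaternion.re_star _).symm
      rw [this, star_mul, star_star]
      exact hab
    · simp only [Prod.mk.injEq, true_and]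
      rw [mul_assoc, mul_assoc, hsa, mul_one]
  · rintro ⟨c, hc, hcre, rfl⟩
    refine ⟨c * a, by simp [norm_mul, hc, ha], ?_, ?_⟩
    · rw [star_mul, ← mul_assoc, has, one_mul, Quaternion.re_star, hcre]
    · simp only [Prod.mk.injEq]
      constructor
      · rw [mul_assoc, has, mul_one]
      · rw [← mul_assoc]
end
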